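/- Let μ be a probability measure on I² = [0,1]². Suppose (a^k, b^k)_k is a μ-distributed sequence with (a^k)_k and (b^k)_k in the class 𝒮. Then for every continuous function φ on [−3,3], lim_{k→∞} (1/k)·Trace[φ(J(a^k,b^k))] = (1/π) ∫_{I²} ∫_0^π φ(x + 2y·cos t) dt dμ(x,y). -/

import Mathlib

open Filter MeasureTheory

noncomputable section

/-- The `k × k` Jacobi (real symmetric tridiagonal) matrix with diagonal entries
`a 0, …, a (k-1)` and sub/super-diagonal entries `b 0, …, b (k-2)` (0-indexed). -/
def jacobiMatrix (k : ℕ) (a b : ℕ → ℝ) : Matrix (Fin k) (Fin k) ℝ :=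
  Matrix.of fun i j =>
    if (i : ℕ) = (j : ℕ) then a i
    else if (i : ℕ) + 1 = (j : ℕ) then b i
    else if (j : ℕ) + 1 = (i : ℕ) then b j
    else 0

theorem jacobiMatrix_isHermitian (k : ℕ) (a b : ℕ → ℝ) :
    (jacobiMatrix k a b).IsHermitian := by
  show _ = _
  ext i j
  simp only [Matrix.conjTranspose_apply, jacobiMatrix, Matrix.of_apply, star_trivial]
  by_cases h1 : (i : ℕ) = (j : ℕ)
  · have h : i = j := Fin.ext h1
    subst h
    rfl
  · have h1' : ¬ (j : ℕ) = (i : ℕ) := fun h => h1 h.symm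
    by_cases h2 : (i : ℕ) + 1 = (j : ℕ)
    · have h3 : ¬ (j : ℕ) + 1 = (i : ℕ) := by omega
      simp [h1, h1', h2, h3]
    · by_cases h3 : (j : ℕ) + 1 = (i : ℕ) <;> simp [h1, h1', h2, h3]

/-- `Trace[φ(J(a,b))] = ∑ⱼ φ(λⱼ)`, the sum of `φ` over the eigenvalues of the Jacobi matrix. -/
def jacobiTrace (k : ℕ) (a b : ℕ → ℝ) (φ : ℝ → ℝ) : ℝ :=
  ∑ i, φ ((jacobiMatrix_isHermitian k a b).eigenvalues i)

/-- The class `𝒮`: small deviations `∑ᵢ |a_{i+1}^k − a_i^k| = o(k)` and entries in `[0,1]`. -/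
def MemS (a : ℕ → ℕ → ℝ) : Prop :=
  ((fun k : ℕ => ∑ i ∈ Finset.range (k - 1), |a k (i + 1) - a k i|)
      =o[Filter.atTop] fun k : ℕ => (k : ℝ)) ∧
  ∀ k : ℕ, ∀ i < k, a k i ∈ Set.Icc (0 : ℝ) 1

/-- The class `𝒮′`: for every `δ ∈ (0,1)`, `∑ᵢ |a_{i+1}^k − a_i^k| = O(k^{1−δ})`, and
`maxᵢ |a_i^k| = O(log k)`. -/
def MemS' (a : ℕ → ℕ → ℝ) : Prop :=
  (∀ δ : ℝ, δ ∈ Set.Ioo (0 : ℝ) 1 →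
    ((fun k : ℕ => ∑ i ∈ Finset.range (k - 1), |a k (i + 1) - a k i|)
        =O[Filter.atTop] fun k : ℕ => (k : ℝ) ^ (1 - δ))) ∧
  ∃ C : ℝ, ∀ᶠ k : ℕ in Filter.atTop, ∀ i < k, |a k i| ≤ C * Real.log k

/-- `μ`-distributed on `I² = [0,1]²`. -/
def MuDistributedI (a b : ℕ → ℕ → ℝ) (μ : Measure (ℝ × ℝ)) : Prop :=
  ∀ ψ : ℝ × ℝ → ℝ, ContinuousOn ψ (Set.Icc (0 : ℝ) 1 ×ˢ Set.Icc (0 : ℝ) 1) →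
    Filter.Tendsto (fun k : ℕ => (1 / (k : ℝ)) * ∑ j ∈ Finset.range k, ψ (a k j, b k j))
      Filter.atTop (nhds (∫ p, ψ p ∂μ))

/-- `μ`-distributed on `ℝ²` (test functions: bounded continuous). -/
def MuDistributedR (a b : ℕ → ℕ → ℝ) (μ : Measure (ℝ × ℝ)) : Prop :=
  ∀ ψ : ℝ × ℝ → ℝ, Continuous ψ → (∃ C : ℝ, ∀ p, |ψ p| ≤ C) →
    Filter.Tendsto (fun k : ℕ => (1 / (k : ℝ)) * ∑ j ∈ Finset.range k, ψ (a k j, b k j))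
      Filter.atTop (nhds (∫ p, ψ p ∂μ))

/-- Tightness via closed bounded rectangles. -/
def TightRect (μ : Measure (ℝ × ℝ)) : Prop :=
  ∀ ε : ℝ, 0 < ε → ∃ x₁ x₂ y₁ y₂ : ℝ,
    μ ((Set.Icc x₁ x₂ ×ˢ Set.Icc y₁ y₂)ᶜ) < ENNReal.ofReal ε

/-- Almost everywhere increasing sequence of vectors. -/
def AEIncreasing (a : ℕ → ℕ → ℝ) : Prop :=
  Filter.Tendsto
    (fun k : ℕ => (((Finset.range (k - 1)).filter fun i => a k i ≤ a k (i + 1)).card : ℝ) / k)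
    Filter.atTop (nhds 1)

/-- Almost everywhere decreasing sequence of vectors. -/
def AEDecreasing (a : ℕ → ℕ → ℝ) : Prop :=
  Filter.Tendsto
    (fun k : ℕ => (((Finset.range (k - 1)).filter fun i => a k (i + 1) ≤ a k i).card : ℝ) / k)
    Filter.atTop (nhds 1)

/-- Almost everywhere monotone sequence of vectors. -/
def AEMonotone (a : ℕ → ℕ → ℝ) : Prop :=
  AEIncreasing a ∨ AEDecreasing a

open Matrix Polynomial Real Set Topology

/-!
Gershgorin's theorem puts the eigenvalues of `J(a^k, b^k)` in `[-3, 3]`, so by Weierstrass it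
suffices to treat polynomials, hence monomials `φ = X^m`, for which `Trace[φ(J)] = ∑ⱼ (J^m)ⱼⱼ`.
The entry `(J^m)ⱼⱼ` only involves the entries of `J` within distance `m` of `j`. Replacing them
by the constants `aⱼ, bⱼ` costs at most `m 3^m` times their local variation, and for constant
entries `(J^m)ⱼⱼ` is the constant term of `(aⱼ + bⱼ (z + z⁻¹))^m`, that is
`(1/π) ∫₀^π (aⱼ + 2 bⱼ cos t)^m dt`. Summed over `j`, the local variations add up to `2m` times
the total variation, which is `o(k)` for sequences in `𝒮`, and the `2m` indices near the
boundary contribute `O(1)`. Dividing by `k`, the `μ`-distribution of `(aᵏ, bᵏ)` turns the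
average of these integrals into the right-hand side.
-/

theorem tendsto_of_forall_approx {ι E : Type*} [PseudoMetricSpace E] {l : Filter ι}
    {u : ι → E} {x : E}
    (h : ∀ ε > 0, ∃ v : ι → E, ∃ y, Tendsto v l (𝓝 y) ∧ (∀ i, dist (u i) (v i) ≤ ε) ∧
      dist x y ≤ ε) :
    Tendsto u l (𝓝 x) := by
  refine Metric.tendsto_nhds.mpr fun ε hε => ?_
  obtain ⟨v, y, hv, huv, hxy⟩ := h (ε / 4) (by positivity)
  filter_upwards [Metric.tendsto_nhds.mp hv (ε / 4) (by positivity)] with i hi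
  calc dist (u i) x ≤ dist (u i) (v i) + dist (v i) y + dist y x := dist_triangle4 _ _ _ _
    _ < ε := by linarith [huv i, dist_comm x y]

theorem ContinuousOn.exists_continuous_eqOn_Icc {α β : Type*} [LinearOrder α]
    [TopologicalSpace α] [OrderTopology α] [TopologicalSpace β] {a b : α} (hab : a ≤ b)
    {f : α → β} (hf : ContinuousOn f (Icc a b)) : ∃ g, Continuous g ∧ EqOn g f (Icc a b) :=
  ⟨IccExtend hab ((Icc a b).domRestrict f), continuous_IccExtend_iff.mpr hf.domRestrict,
    fun _ hx => IccExtend_of_mem hab _ hx⟩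

theorem ContinuousOn.integrable_of_ae_mem {X E : Type*} [TopologicalSpace X] [T2Space X]
    [MeasurableSpace X] [OpensMeasurableSpace X] [NormedAddCommGroup E] {μ : Measure X}
    [IsFiniteMeasure μ] {f : X → E} {K : Set X} (hf : ContinuousOn f K) (hK : IsCompact K)
    (hμK : ∀ᵐ x ∂μ, x ∈ K) : Integrable f μ := by
  simpa only [IntegrableOn, Measure.restrict_eq_self_of_ae_mem hμK] using
    hf.integrableOn_compact (μ := μ) hK

namespace Matrix

variable {n : Type*} [Fintype n] [DecidableEq n]

theorem abs_pow_apply_le_of_sum_abs_le {A : Matrix n n ℝ} {C : ℝ} (hA : ∀ i, ∑ j, |A i j| ≤ C)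
    (m : ℕ) (i j : n) : |(A ^ m) i j| ≤ C ^ m := by
  induction m generalizing i with
  | zero => rw [pow_zero, one_apply]; split_ifs <;> simp
  | succ m ih =>
    have hC : 0 ≤ C := (Finset.sum_nonneg fun j _ => abs_nonneg (A i j)).trans (hA i)
    rw [pow_succ', mul_apply, pow_succ']
    calc |∑ t, A i t * (A ^ m) t j| ≤ ∑ t, |A i t| * C ^ m :=
          (Finset.abs_sum_le_sum_abs _ _).trans <| Finset.sum_le_sum fun t _ => by
            rw [abs_mul]; exact mul_le_mul_of_nonneg_left (ih t) (abs_nonneg _)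
      _ ≤ C * C ^ m := by rw [← Finset.sum_mul]; gcongr; exact hA i

theorem IsHermitian.abs_eigenvalues_le_of_sum_abs_le {A : Matrix n n ℝ} (hA : A.IsHermitian)
    {C : ℝ} (hC : ∀ i, ∑ j, |A i j| ≤ C) (i : n) : |hA.eigenvalues i| ≤ C := by
  have hμ : Module.End.HasEigenvalue (toLin' A) (hA.eigenvalues i) :=
    Module.End.hasEigenvalue_iff_mem_spectrum.mpr <| by
      rw [spectrum_toLin']; exact hA.eigenvalues_mem_spectrum_real i
  obtain ⟨r, hr⟩ := eigenvalue_mem_ball hμ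
  rw [Metric.mem_closedBall, Real.dist_eq] at hr
  calc |hA.eigenvalues i| = |A r r + (hA.eigenvalues i - A r r)| := by rw [add_sub_cancel]
    _ ≤ |A r r| + |hA.eigenvalues i - A r r| := abs_add_le _ _
    _ ≤ |A r r| + ∑ j ∈ Finset.univ.erase r, ‖A r j‖ := by gcongr
    _ = ∑ j, |A r j| := Finset.add_sum_erase _ (fun j => |A r j|) (Finset.mem_univ r)
    _ ≤ C := hC r

theorem IsHermitian.trace_aeval {A : Matrix n n ℝ} (hA : A.IsHermitian) (p : ℝ[X]) :
    (aeval A p).trace = ∑ i, p.eval (hA.eigenvalues i) := by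
  rw [← cfc_polynomial p A hA.isSelfAdjoint, hA.cfc_eq, IsHermitian.cfc,
    Unitary.conjStarAlgAut_apply, trace_mul_cycle, Unitary.coe_star_mul_self, one_mul,
    trace_diagonal]
  simp

end Matrix

section JacobiMatrix

variable {k : ℕ} {a b : ℕ → ℝ}

theorem jacobiMatrix_apply (i j : Fin k) :
    jacobiMatrix k a b i j = (if (i : ℕ) = j then a i else 0) +
      (if (i : ℕ) + 1 = j then b i else 0) + (if (j : ℕ) + 1 = i then b j else 0) := by
  simp only [jacobiMatrix, of_apply]
  split_ifs <;> first | omega | ring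

theorem sum_abs_jacobiMatrix_le (ha : ∀ i < k, |a i| ≤ 1) (hb : ∀ i < k, |b i| ≤ 1)
    (i : Fin k) : ∑ j, |jacobiMatrix k a b i j| ≤ 3 := by
  have hsub (p : Fin k → Prop) [DecidablePred p] (hp : ∀ x y, p x → p y → x = y) :
      ∑ j, (if p j then (1 : ℝ) else 0) ≤ 1 := by
    rw [Finset.sum_boole]
    exact_mod_cast Finset.card_le_one.mpr fun x hx y hy =>
      hp x y (Finset.mem_filter.mp hx).2 (Finset.mem_filter.mp hy).2
  calc ∑ j, |jacobiMatrix k a b i j|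
      ≤ ∑ j : Fin k, ((if (i : ℕ) = j then 1 else 0) + (if (i : ℕ) + 1 = j then 1 else 0) +
          (if (j : ℕ) + 1 = i then 1 else 0)) := by
        gcongr with j
        rw [jacobiMatrix_apply]
        refine (abs_add_three _ _ _).trans ?_
        gcongr <;> split_ifs <;> simp [ha, hb, i.isLt, j.isLt]
    _ ≤ 1 + 1 + 1 := by
        simp only [Finset.sum_add_distrib]
        gcongr <;> exact hsub _ fun x y hx hy => Fin.ext (by omega)
    _ = 3 := by norm_num

theorem jacobiMatrix_mul_apply (M : Matrix (Fin k) (Fin k) ℝ) {i : Fin k} (h₁ : 1 ≤ (i : ℕ))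
    (h₂ : (i : ℕ) + 1 < k) (l : Fin k) :
    (jacobiMatrix k a b * M) i l =
      a i * M i l + b (i - 1) * M ⟨i - 1, by omega⟩ l + b i * M ⟨i + 1, h₂⟩ l := by
  have hrow : ∀ t : Fin k, jacobiMatrix k a b i t * M t l =
      (if i = t then a i * M i l else 0) +
      (if (⟨i - 1, by omega⟩ : Fin k) = t then b (i - 1) * M ⟨i - 1, by omega⟩ l else 0) +
      (if (⟨i + 1, h₂⟩ : Fin k) = t then b i * M ⟨i + 1, h₂⟩ l else 0) := by
    rintro ⟨t, ht⟩
    rw [jacobiMatrix_apply]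
    simp only [Fin.ext_iff]
    split_ifs <;> first | omega | (subst_vars; ring)
  rw [mul_apply, Finset.sum_congr rfl fun t _ => hrow t]
  simp only [Finset.sum_add_distrib, Finset.sum_ite_eq, Finset.mem_univ, if_true]

theorem jacobiMatrix_eigenvalues_mem_Icc (ha : ∀ i < k, |a i| ≤ 1) (hb : ∀ i < k, |b i| ≤ 1)
    (i : Fin k) : (jacobiMatrix_isHermitian k a b).eigenvalues i ∈ Icc (-3 : ℝ) 3 :=
  abs_le.mp <| (jacobiMatrix_isHermitian k a b).abs_eigenvalues_le_of_sum_abs_le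
    (sum_abs_jacobiMatrix_le ha hb) i

theorem jacobiTrace_congr (ha : ∀ i < k, |a i| ≤ 1) (hb : ∀ i < k, |b i| ≤ 1) {φ ψ : ℝ → ℝ}
    (h : EqOn φ ψ (Icc (-3) 3)) : jacobiTrace k a b φ = jacobiTrace k a b ψ :=
  Finset.sum_congr rfl fun i _ => h (jacobiMatrix_eigenvalues_mem_Icc ha hb i)

theorem abs_jacobiTrace_sub_le (ha : ∀ i < k, |a i| ≤ 1) (hb : ∀ i < k, |b i| ≤ 1)
    {φ ψ : ℝ → ℝ} {ε : ℝ} (h : ∀ x ∈ Icc (-3 : ℝ) 3, |φ x - ψ x| ≤ ε) :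
    |jacobiTrace k a b φ - jacobiTrace k a b ψ| ≤ k * ε := by
  rw [jacobiTrace, jacobiTrace, ← Finset.sum_sub_distrib]
  calc _ ≤ ∑ i, |φ _ - ψ _| := Finset.abs_sum_le_sum_abs _ _
    _ ≤ ∑ _i : Fin k, ε :=
        Finset.sum_le_sum fun i _ => h _ (jacobiMatrix_eigenvalues_mem_Icc ha hb i)
    _ = k * ε := by simp

theorem jacobiTrace_eval (p : ℝ[X]) :
    jacobiTrace k a b (fun x => p.eval x) =
      ∑ n ∈ Finset.range (p.natDegree + 1), p.coeff n * trace (jacobiMatrix k a b ^ n) := by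
  rw [jacobiTrace, ← (jacobiMatrix_isHermitian k a b).trace_aeval, aeval_eq_sum_range,
    trace_sum]
  simp [trace_smul]

end JacobiMatrix

/-- The coefficient of `z ^ d` in `(x + y (z + z⁻¹)) ^ n`, i.e. the `(i, i + d)` entry of the
`n`-th power of the bi-infinite Jacobi matrix with constant entries `x` and `y`. -/
def symbolCoeff : ℕ → ℤ → ℝ → ℝ → ℝ
  | 0, d, _, _ => if d = 0 then 1 else 0
  | n + 1, d, x, y =>
    x * symbolCoeff n d x y + y * (symbolCoeff n (d - 1) x y + symbolCoeff n (d + 1) x y)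

theorem abs_symbolCoeff_le {x y : ℝ} (hx : |x| ≤ 1) (hy : |y| ≤ 1) (n : ℕ) (d : ℤ) :
    |symbolCoeff n d x y| ≤ 3 ^ n := by
  induction n generalizing d with
  | zero => simp only [symbolCoeff]; split_ifs <;> simp
  | succ n ih =>
    calc |symbolCoeff (n + 1) d x y|
        ≤ |x| * |symbolCoeff n d x y| +
            |y| * (|symbolCoeff n (d - 1) x y| + |symbolCoeff n (d + 1) x y|) := by
          rw [symbolCoeff]
          refine (abs_add_le _ _).trans ?_
          rw [abs_mul, abs_mul]
          gcongr
          exact abs_add_le _ _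
      _ ≤ 1 * 3 ^ n + 1 * (3 ^ n + 3 ^ n) := by gcongr <;> simp only [ih]
      _ = 3 ^ (n + 1) := by ring

theorem continuous_symbolCoeff (n : ℕ) (d : ℤ) :
    Continuous fun p : ℝ × ℝ => symbolCoeff n d p.1 p.2 := by
  induction n generalizing d with
  | zero => exact continuous_const
  | succ n ih => simp only [symbolCoeff]; fun_prop

theorem integral_cos_int_mul (d : ℤ) :
    ∫ t in (0 : ℝ)..π, cos (d * t) = if d = 0 then π else 0 := by
  split_ifs with hd
  · simp [hd]
  · have hd' : (d : ℝ) ≠ 0 := Int.cast_ne_zero.mpr hd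
    rw [intervalIntegral.integral_comp_mul_left cos hd']
    simp [sin_int_mul_pi]

theorem symbolCoeff_eq_integral (n : ℕ) (d : ℤ) (x y : ℝ) :
    symbolCoeff n d x y = π⁻¹ * ∫ t in (0 : ℝ)..π, (x + 2 * y * cos t) ^ n * cos (d * t) := by
  induction n generalizing d with
  | zero =>
    simp only [symbolCoeff, pow_zero, one_mul, integral_cos_int_mul]
    split_ifs <;> simp [pi_ne_zero]
  | succ n ih =>
    set f : ℤ → ℝ → ℝ := fun e t => (x + 2 * y * cos t) ^ n * cos (e * t)
    have hf (e : ℤ) : IntervalIntegrable (f e) MeasureTheory.volume 0 π :=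
      (by fun_prop : Continuous (f e)).intervalIntegrable _ _
    -- `2 cos t cos (d t) = cos ((d - 1) t) + cos ((d + 1) t)`
    have hsplit (t : ℝ) : (x + 2 * y * cos t) ^ (n + 1) * cos (d * t) =
        x * f d t + y * (f (d - 1) t + f (d + 1) t) := by
      simp only [f, Int.cast_sub, Int.cast_add, Int.cast_one, sub_mul, add_mul, one_mul,
        cos_sub, cos_add]
      ring
    simp only [symbolCoeff, ih, hsplit, intervalIntegral.integral_add ((hf d).const_mul x)
      (((hf _).add (hf _)).const_mul y), intervalIntegral.integral_const_mul,
      intervalIntegral.integral_add (hf _) (hf _)]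
    ring

def discreteVariation (f : ℕ → ℝ) (k : ℕ) : ℝ :=
  ∑ i ∈ Finset.range (k - 1), |f (i + 1) - f i|

def windowVariation (f : ℕ → ℝ) (k m j : ℕ) : ℝ :=
  ∑ i ∈ (Finset.range (k - 1)).filter (fun i => j ≤ i + m ∧ i < j + m), |f (i + 1) - f i|

theorem windowVariation_nonneg (f : ℕ → ℝ) (k m j : ℕ) : 0 ≤ windowVariation f k m j :=
  Finset.sum_nonneg fun _ _ => abs_nonneg _

theorem abs_sub_le_windowVariation (f : ℕ → ℝ) {k m j s : ℕ} (hj : j < k) (hs : s < k)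
    (hsj : s ≤ j + m) (hjs : j ≤ s + m) : |f s - f j| ≤ windowVariation f k m j := by
  have key {p q : ℕ} (hpq : p ≤ q) (hsub : Finset.Ico p q ⊆
      (Finset.range (k - 1)).filter (fun i => j ≤ i + m ∧ i < j + m)) :
      |f p - f q| ≤ windowVariation f k m j :=
    calc |f p - f q| ≤ ∑ i ∈ Finset.Ico p q, dist (f i) (f (i + 1)) := dist_le_Ico_sum_dist f hpq
      _ = ∑ i ∈ Finset.Ico p q, |f (i + 1) - f i| :=
          Finset.sum_congr rfl fun i _ => by rw [dist_comm, Real.dist_eq]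
      _ ≤ windowVariation f k m j :=
          Finset.sum_le_sum_of_subset_of_nonneg hsub fun _ _ _ => abs_nonneg _
  rcases le_total s j with h | h
  · exact key h fun i hi => by
      simp only [Finset.mem_Ico, Finset.mem_filter, Finset.mem_range] at hi ⊢; omega
  · rw [abs_sub_comm]
    exact key h fun i hi => by
      simp only [Finset.mem_Ico, Finset.mem_filter, Finset.mem_range] at hi ⊢; omega

theorem sum_windowVariation_le (f : ℕ → ℝ) (k m : ℕ) :
    ∑ j ∈ Finset.range k, windowVariation f k m j ≤ 2 * m * discreteVariation f k := by
  simp only [windowVariation, discreteVariation, Finset.sum_filter]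
  rw [Finset.sum_comm, Finset.mul_sum]
  gcongr with i
  rw [← Finset.sum_filter, Finset.sum_const, nsmul_eq_mul]
  gcongr
  calc (((Finset.range k).filter fun j => j ≤ i + m ∧ i < j + m).card : ℝ)
      ≤ (Finset.Icc (i + 1 - m) (i + m)).card := by
        gcongr
        intro j hj
        simp only [Finset.mem_filter, Finset.mem_range, Finset.mem_Icc] at hj ⊢
        omega
    _ ≤ 2 * m := by rw [Nat.card_Icc]; norm_cast; omega

section Localization

variable {k : ℕ} {a b : ℕ → ℝ}

theorem abs_jacobiMatrix_pow_apply_sub_symbolCoeff_le (ha : ∀ i < k, |a i| ≤ 1)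
    (hb : ∀ i < k, |b i| ≤ 1) {x y ε : ℝ} (hx : |x| ≤ 1) (hy : |y| ≤ 1) {j r : ℕ}
    (hloc : ∀ s < k, s ≤ j + r → j ≤ s + r → |a s - x| ≤ ε ∧ |b s - y| ≤ ε)
    (n : ℕ) (i l : Fin k) (hi : n ≤ i) (hik : i + n < k) (hij : i + n ≤ j + r)
    (hji : j + n ≤ i + r) :
    |(jacobiMatrix k a b ^ n) i l - symbolCoeff n ((l : ℤ) - i) x y| ≤ n * 3 ^ n * ε := by
  induction n generalizing i with
  | zero =>
    have : (i = l) ↔ ((l : ℤ) - i = 0) := by rw [Fin.ext_iff]; omega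
    simp [one_apply, symbolCoeff, this]
  | succ n ih =>
    have h₁ : 1 ≤ (i : ℕ) := by omega
    have h₂ : (i : ℕ) + 1 < k := by omega
    obtain ⟨hai, hbi⟩ := hloc i i.isLt (by omega) (by omega)
    have hbi' := (hloc (i - 1) (by omega) (by omega) (by omega)).2
    have hε : 0 ≤ ε := (abs_nonneg _).trans hai
    have hterm {α β u v : ℝ} (hα : |α| ≤ 1) (hαβ : |α - β| ≤ ε) (huv : |u - v| ≤ n * 3 ^ n * ε)
        (hv : |v| ≤ 3 ^ n) : |α * u - β * v| ≤ (n + 1) * 3 ^ n * ε :=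
      calc |α * u - β * v| = |α * (u - v) + (α - β) * v| := by ring_nf
        _ ≤ |α| * |u - v| + |α - β| * |v| := by rw [← abs_mul, ← abs_mul]; exact abs_add_le _ _
        _ ≤ 1 * (n * 3 ^ n * ε) + ε * 3 ^ n := by gcongr
        _ = (n + 1) * 3 ^ n * ε := by ring
    -- Row `i` of `J ^ (n + 1)` and `symbolCoeff (n + 1)` obey the same three-term recurrence,
    -- with `a i, b (i - 1), b i` in place of `x, y, y`.
    rw [pow_succ', jacobiMatrix_mul_apply _ h₁ h₂, symbolCoeff]
    set M := jacobiMatrix k a b ^ n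
    set d : ℤ := (l : ℤ) - i
    have t₁ := hterm (ha i i.isLt) hai (ih i (by omega) (by omega) (by omega) (by omega))
      (abs_symbolCoeff_le hx hy n d)
    have t₂ := hterm (hb (i - 1) (by omega)) hbi'
      (ih ⟨i - 1, by omega⟩ (by simp; omega) (by simp; omega) (by simp; omega) (by simp; omega))
      (abs_symbolCoeff_le hx hy n _)
    have t₃ := hterm (hb i i.isLt) hbi
      (ih ⟨i + 1, h₂⟩ (by simp; omega) (by simp; omega) (by simp; omega) (by simp; omega))
      (abs_symbolCoeff_le hx hy n _)
    have e₁ : (l : ℤ) - ((⟨i - 1, by omega⟩ : Fin k) : ℕ) = d + 1 := by simp [d]; omega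
    have e₂ : (l : ℤ) - ((⟨i + 1, h₂⟩ : Fin k) : ℕ) = d - 1 := by simp [d]; omega
    rw [e₁] at t₂
    rw [e₂] at t₃
    calc _ = |(a i * M i l - x * symbolCoeff n d x y) +
            (b (i - 1) * M ⟨i - 1, by omega⟩ l - y * symbolCoeff n (d + 1) x y) +
            (b i * M ⟨i + 1, h₂⟩ l - y * symbolCoeff n (d - 1) x y)| := by congr 1; ring
      _ ≤ 3 * ((n + 1) * 3 ^ n * ε) := (abs_add_three _ _ _).trans (by linarith)
      _ = (n + 1 : ℕ) * 3 ^ (n + 1) * ε := by push_cast; ring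

theorem abs_jacobiMatrix_pow_apply_self_sub_le (ha : ∀ i < k, |a i| ≤ 1)
    (hb : ∀ i < k, |b i| ≤ 1) (m : ℕ) (j : Fin k) :
    |(jacobiMatrix k a b ^ m) j j - symbolCoeff m 0 (a j) (b j)| ≤
      (if m ≤ j ∧ j + m < k then 0 else 2 * 3 ^ m) +
        m * 3 ^ m * (windowVariation a k m j + windowVariation b k m j) := by
  split_ifs with h
  · have hloc (s : ℕ) (hs : s < k) (hsj : s ≤ j + m) (hjs : j ≤ s + m) :
        |a s - a j| ≤ windowVariation a k m j + windowVariation b k m j ∧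
          |b s - b j| ≤ windowVariation a k m j + windowVariation b k m j :=
      ⟨le_add_of_le_of_nonneg (abs_sub_le_windowVariation a j.isLt hs hsj hjs)
          (windowVariation_nonneg b k m j),
        le_add_of_nonneg_of_le (windowVariation_nonneg a k m j)
          (abs_sub_le_windowVariation b j.isLt hs hsj hjs)⟩
    simpa using abs_jacobiMatrix_pow_apply_sub_symbolCoeff_le ha hb (ha j j.isLt) (hb j j.isLt)
      hloc m j j h.1 h.2 le_rfl le_rfl
  · calc _ ≤ |(jacobiMatrix k a b ^ m) j j| + |symbolCoeff m 0 (a j) (b j)| := abs_sub _ _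
      _ ≤ 3 ^ m + 3 ^ m := add_le_add
          (abs_pow_apply_le_of_sum_abs_le (sum_abs_jacobiMatrix_le ha hb) m j j)
          (abs_symbolCoeff_le (ha j j.isLt) (hb j j.isLt) m 0)
      _ ≤ _ := by
          have : 0 ≤ (m : ℝ) * 3 ^ m * (windowVariation a k m j + windowVariation b k m j) :=
            mul_nonneg (by positivity)
              (add_nonneg (windowVariation_nonneg a k m j) (windowVariation_nonneg b k m j))
          linarith

theorem abs_trace_jacobiMatrix_pow_sub_le (ha : ∀ i < k, |a i| ≤ 1) (hb : ∀ i < k, |b i| ≤ 1)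
    (m : ℕ) :
    |trace (jacobiMatrix k a b ^ m) - ∑ j ∈ Finset.range k, symbolCoeff m 0 (a j) (b j)| ≤
      4 * m * 3 ^ m + 2 * m ^ 2 * 3 ^ m * (discreteVariation a k + discreteVariation b k) := by
  have hboundary : ∑ j ∈ Finset.range k,
      (if m ≤ j ∧ j + m < k then 0 else 2 * 3 ^ m : ℝ) ≤ 2 * m * (2 * 3 ^ m) := by
    rw [Finset.sum_ite, Finset.sum_const_zero, zero_add, Finset.sum_const, nsmul_eq_mul]
    gcongr
    calc (((Finset.range k).filter fun j => ¬(m ≤ j ∧ j + m < k)).card : ℝ)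
        ≤ (Finset.range m ∪ Finset.Ico (k - m) k).card := by
          gcongr
          intro j hj
          simp only [Finset.mem_filter, Finset.mem_range, Finset.mem_union, Finset.mem_Ico] at hj ⊢
          omega
      _ ≤ 2 * m := by
          norm_cast
          refine (Finset.card_union_le _ _).trans ?_
          simp only [Finset.card_range, Nat.card_Ico]
          omega
  rw [trace, ← Fin.sum_univ_eq_sum_range (fun j => symbolCoeff m 0 (a j) (b j)),
    ← Finset.sum_sub_distrib]
  calc _ ≤ ∑ j : Fin k, ((if m ≤ j ∧ j + m < k then 0 else 2 * 3 ^ m) +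
        m * 3 ^ m * (windowVariation a k m j + windowVariation b k m j)) :=
        (Finset.abs_sum_le_sum_abs _ _).trans <| Finset.sum_le_sum fun j _ =>
          abs_jacobiMatrix_pow_apply_self_sub_le ha hb m j
    _ = ∑ j ∈ Finset.range k, (if m ≤ j ∧ j + m < k then 0 else 2 * 3 ^ m) +
        m * 3 ^ m * (∑ j ∈ Finset.range k, windowVariation a k m j +
          ∑ j ∈ Finset.range k, windowVariation b k m j) := by
        rw [Fin.sum_univ_eq_sum_range (fun j => (if m ≤ j ∧ j + m < k then 0 else 2 * 3 ^ m) +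
          m * 3 ^ m * (windowVariation a k m j + windowVariation b k m j)) k,
          Finset.sum_add_distrib, ← Finset.mul_sum, Finset.sum_add_distrib]
    _ ≤ 2 * m * (2 * 3 ^ m) + m * 3 ^ m *
        (2 * m * discreteVariation a k + 2 * m * discreteVariation b k) := by
        gcongr
        exacts [sum_windowVariation_le a k m, sum_windowVariation_le b k m]
    _ = _ := by ring

end Localization

def symbolMean (μ : Measure (ℝ × ℝ)) (φ : ℝ → ℝ) : ℝ :=
  (1 / π) * ∫ q, (∫ t in (0 : ℝ)..π, φ (q.1 + 2 * q.2 * cos t)) ∂μ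

theorem add_two_mul_mul_cos_mem_Icc {q : ℝ × ℝ} (hq : q ∈ Icc (0 : ℝ) 1 ×ˢ Icc (0 : ℝ) 1)
    (t : ℝ) : q.1 + 2 * q.2 * cos t ∈ Icc (-3 : ℝ) 3 := by
  obtain ⟨⟨h₁, h₂⟩, h₃, h₄⟩ := hq
  constructor <;> nlinarith [neg_one_le_cos t, cos_le_one t]

theorem symbolMean_eval {μ : Measure (ℝ × ℝ)} [IsFiniteMeasure μ]
    (hμK : ∀ᵐ q ∂μ, q ∈ Icc (0 : ℝ) 1 ×ˢ Icc (0 : ℝ) 1) (p : ℝ[X]) :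
    symbolMean μ (fun x => p.eval x) =
      ∑ n ∈ Finset.range (p.natDegree + 1), p.coeff n * ∫ q, symbolCoeff n 0 q.1 q.2 ∂μ := by
  have hpt (q : ℝ × ℝ) : ∫ t in (0 : ℝ)..π, p.eval (q.1 + 2 * q.2 * cos t) =
      π * ∑ n ∈ Finset.range (p.natDegree + 1), p.coeff n * symbolCoeff n 0 q.1 q.2 := by
    simp only [eval_eq_sum_range, symbolCoeff_eq_integral, Int.cast_zero, zero_mul, cos_zero,
      mul_one, Finset.mul_sum]
    rw [intervalIntegral.integral_finsetSum fun n _ => (by fun_prop : Continuous fun t =>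
      p.coeff n * (q.1 + 2 * q.2 * cos t) ^ n).intervalIntegrable _ _]
    refine Finset.sum_congr rfl fun n _ => ?_
    rw [intervalIntegral.integral_const_mul]
    field_simp
  have hint (n : ℕ) : Integrable (fun q : ℝ × ℝ => p.coeff n * symbolCoeff n 0 q.1 q.2) μ :=
    ((continuous_symbolCoeff n 0).continuousOn.integrable_of_ae_mem
      (isCompact_Icc.prod isCompact_Icc) hμK).const_mul _
  simp only [symbolMean, hpt, integral_const_mul, integral_finsetSum _ fun n _ => hint n]
  field_simp

theorem symbolMean_congr {μ : Measure (ℝ × ℝ)}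
    (hμK : ∀ᵐ q ∂μ, q ∈ Icc (0 : ℝ) 1 ×ˢ Icc (0 : ℝ) 1) {φ ψ : ℝ → ℝ}
    (h : EqOn φ ψ (Icc (-3) 3)) :
    symbolMean μ φ = symbolMean μ ψ := by
  rw [symbolMean, symbolMean, integral_congr_ae <| hμK.mono fun q hq =>
    intervalIntegral.integral_congr fun t _ => h (add_two_mul_mul_cos_mem_Icc hq t)]

theorem abs_symbolMean_sub_le {μ : Measure (ℝ × ℝ)} [IsProbabilityMeasure μ]
    (hμK : ∀ᵐ q ∂μ, q ∈ Icc (0 : ℝ) 1 ×ˢ Icc (0 : ℝ) 1) {φ ψ : ℝ → ℝ}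
    (hφ : Continuous φ) (hψ : Continuous ψ) {ε : ℝ} (h : ∀ x ∈ Icc (-3 : ℝ) 3, |φ x - ψ x| ≤ ε) :
    |symbolMean μ φ - symbolMean μ ψ| ≤ ε := by
  have hint {f : ℝ → ℝ} (hf : Continuous f) :
      Integrable (fun q : ℝ × ℝ => ∫ t in (0 : ℝ)..π, f (q.1 + 2 * q.2 * cos t)) μ :=
    (intervalIntegral.continuous_parametric_intervalIntegral_of_continuous' (by fun_prop) 0 π
      ).continuousOn.integrable_of_ae_mem (isCompact_Icc.prod isCompact_Icc) hμK
  have hpt : ∀ᵐ q ∂μ, ‖(∫ t in (0 : ℝ)..π, φ (q.1 + 2 * q.2 * cos t)) -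
      ∫ t in (0 : ℝ)..π, ψ (q.1 + 2 * q.2 * cos t)‖ ≤ ε * π := hμK.mono fun q hq => by
    rw [← intervalIntegral.integral_sub ((by fun_prop : Continuous fun t =>
      φ (q.1 + 2 * q.2 * cos t)).intervalIntegrable _ _) ((by fun_prop : Continuous fun t =>
      ψ (q.1 + 2 * q.2 * cos t)).intervalIntegrable _ _)]
    simpa [abs_of_pos pi_pos] using intervalIntegral.norm_integral_le_of_norm_le_const (a := 0)
      (b := π) fun t _ => (Real.norm_eq_abs _).trans_le (h _ (add_two_mul_mul_cos_mem_Icc hq t))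
  calc |symbolMean μ φ - symbolMean μ ψ|
      = π⁻¹ * ‖∫ q, ((∫ t in (0 : ℝ)..π, φ (q.1 + 2 * q.2 * cos t)) -
          ∫ t in (0 : ℝ)..π, ψ (q.1 + 2 * q.2 * cos t)) ∂μ‖ := by
        rw [integral_sub (hint hφ) (hint hψ), symbolMean, symbolMean, ← mul_sub, abs_mul,
          Real.norm_eq_abs, one_div, abs_of_pos (inv_pos.mpr pi_pos)]
    _ ≤ π⁻¹ * (ε * π) := by gcongr; simpa using norm_integral_le_of_norm_le_const hpt
    _ = ε := by field_simp

theorem MemS.abs_le_one {a : ℕ → ℕ → ℝ} (ha : MemS a) {k : ℕ} : ∀ i < k, |a k i| ≤ 1 :=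
  fun i hi => abs_le.mpr ⟨by linarith [(ha.2 k i hi).1], (ha.2 k i hi).2⟩

theorem tendsto_trace_jacobiMatrix_pow {a b : ℕ → ℕ → ℝ} (ha : MemS a) (hb : MemS b)
    {μ : Measure (ℝ × ℝ)} (hμ : MuDistributedI a b μ) (m : ℕ) :
    Tendsto (fun k : ℕ => (1 / (k : ℝ)) * trace (jacobiMatrix k (a k) (b k) ^ m)) atTop
      (𝓝 (∫ q, symbolCoeff m 0 q.1 q.2 ∂μ)) := by
  set V : ℕ → ℝ := fun k => discreteVariation (a k) k + discreteVariation (b k) k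
  have hV : Tendsto (fun k : ℕ => V k / k) atTop (𝓝 0) := (ha.1.add hb.1).tendsto_div_nhds_zero
  have herr : Tendsto (fun k : ℕ => (4 * m * 3 ^ m : ℝ) / k + 2 * m ^ 2 * 3 ^ m * (V k / k)) atTop
      (𝓝 0) := by
    simpa using (tendsto_const_div_atTop_nhds_zero_nat _).add (hV.const_mul (2 * m ^ 2 * 3 ^ m : ℝ))
  refine (hμ _ (continuous_symbolCoeff m 0).continuousOn).congr_dist <|
    squeeze_zero (fun _ => dist_nonneg) (fun k => ?_) herr
  rw [Real.dist_eq, ← mul_sub, abs_mul, abs_sub_comm, abs_of_nonneg (by positivity)]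
  calc 1 / (k : ℝ) * |trace (jacobiMatrix k (a k) (b k) ^ m) -
        ∑ j ∈ Finset.range k, symbolCoeff m 0 (a k j) (b k j)|
      ≤ 1 / k * (4 * m * 3 ^ m + 2 * m ^ 2 * 3 ^ m * V k) := by
        gcongr
        exact abs_trace_jacobiMatrix_pow_sub_le ha.abs_le_one hb.abs_le_one m
    _ = (4 * m * 3 ^ m : ℝ) / k + 2 * m ^ 2 * 3 ^ m * (V k / k) := by ring

theorem tendsto_jacobiTrace_eval {a b : ℕ → ℕ → ℝ} (ha : MemS a) (hb : MemS b)
    {μ : Measure (ℝ × ℝ)} [IsFiniteMeasure μ]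
    (hμK : ∀ᵐ q ∂μ, q ∈ Icc (0 : ℝ) 1 ×ˢ Icc (0 : ℝ) 1) (hμ : MuDistributedI a b μ)
    (p : ℝ[X]) :
    Tendsto (fun k : ℕ => (1 / (k : ℝ)) * jacobiTrace k (a k) (b k) (fun x => p.eval x)) atTop
      (𝓝 (symbolMean μ fun x => p.eval x)) := by
  simp only [symbolMean_eval hμK, jacobiTrace_eval, Finset.mul_sum, mul_left_comm (1 / _ : ℝ)]
  exact tendsto_finsetSum _ fun n _ => (tendsto_trace_jacobiMatrix_pow ha hb hμ n).const_mul _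

theorem tendsto_jacobiTrace_of_continuous {a b : ℕ → ℕ → ℝ} (ha : MemS a) (hb : MemS b)
    {μ : Measure (ℝ × ℝ)} [IsProbabilityMeasure μ]
    (hμK : ∀ᵐ q ∂μ, q ∈ Icc (0 : ℝ) 1 ×ˢ Icc (0 : ℝ) 1) (hμ : MuDistributedI a b μ)
    {φ : ℝ → ℝ} (hφ : Continuous φ) :
    Tendsto (fun k : ℕ => (1 / (k : ℝ)) * jacobiTrace k (a k) (b k) φ) atTop
      (𝓝 (symbolMean μ φ)) := by
  refine tendsto_of_forall_approx fun ε hε => ?_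
  obtain ⟨p, hp⟩ := exists_polynomial_near_of_continuousOn (-3) 3 φ hφ.continuousOn ε hε
  have hφp (x : ℝ) (hx : x ∈ Icc (-3 : ℝ) 3) : |φ x - p.eval x| ≤ ε := by
    rw [abs_sub_comm]; exact (hp x hx).le
  refine ⟨_, _, tendsto_jacobiTrace_eval ha hb hμK hμ p, fun k => ?_,
    (Real.dist_eq _ _).trans_le (abs_symbolMean_sub_le hμK hφ p.continuous hφp)⟩
  rw [Real.dist_eq, ← mul_sub, abs_mul, abs_of_nonneg (by positivity)]
  rcases k.eq_zero_or_pos with rfl | hk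
  · simpa using hε.le
  calc 1 / (k : ℝ) * |jacobiTrace k (a k) (b k) φ - jacobiTrace k (a k) (b k) fun x => p.eval x|
      ≤ 1 / k * (k * ε) := by gcongr; exact abs_jacobiTrace_sub_le ha.abs_le_one hb.abs_le_one hφp
    _ = ε := by field_simp

/-- Theorem 1: if `(a^k)ₖ, (b^k)ₖ ∈ 𝒮` and `(a^k,b^k)ₖ` is `μ`-distributed for a
probability measure `μ` on `I² = [0,1]²`, then for every `φ ∈ C[-3,3]`,
`lim (1/k)·Trace[φ(J(a^k,b^k))] = (1/π) ∫_{I²} ∫_0^π φ(x+2y cos t) dt dμ(x,y)`. -/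
theorem trace_formula_memS (a b : ℕ → ℕ → ℝ) (ha : MemS a) (hb : MemS b)
    (μ : Measure (ℝ × ℝ)) [IsProbabilityMeasure μ]
    (hsupp : μ ((Set.Icc (0 : ℝ) 1 ×ˢ Set.Icc (0 : ℝ) 1)ᶜ) = 0)
    (hμ : MuDistributedI a b μ)
    (φ : ℝ → ℝ) (hφ : ContinuousOn φ (Set.Icc (-3 : ℝ) 3)) :
    Filter.Tendsto (fun k : ℕ => (1 / (k : ℝ)) * jacobiTrace k (a k) (b k) φ)
      Filter.atTop
      (nhds ((1 / Real.pi) *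
        ∫ p, (∫ t in (0 : ℝ)..Real.pi, φ (p.1 + 2 * p.2 * Real.cos t)) ∂μ)) := by
  obtain ⟨ψ, hψ, hψφ⟩ := hφ.exists_continuous_eqOn_Icc (by norm_num)
  have hμK : ∀ᵐ q ∂μ, q ∈ Icc (0 : ℝ) 1 ×ˢ Icc (0 : ℝ) 1 := ae_iff.mpr hsupp
  have h := tendsto_jacobiTrace_of_continuous ha hb hμK hμ hψ
  simp only [jacobiTrace_congr ha.abs_le_one hb.abs_le_one hψφ, symbolMean_congr hμK hψφ] at h
  exact h
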